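/- There exist a real number ε > 0, a finite set Λ of unit vectors in ℝ³ all of whose coordinates are rational, an assignment to each η ∈ Λ of two vectors η₁, η₂ ∈ ℝ³ such that (η, η₁, η₂) is an orthonormal frame, and functions Γ_η : Sym₀³ → ℝ that are smooth on the open ball of radius ε centered at the zero matrix, such that every symmetric traceless 3×3 real matrix R with ‖R‖ < ε satisfies R = Σ_{η∈Λ} Γ_η(R)² · (η₁ ⊗ η₁ − η₂ ⊗ η₂). Moreover, for any prescribed finite set F of unit vectors in ℝ³, the set Λ can be chosen so that Λ ∩ F = ∅. -/

import Mathlib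

open scoped BigOperators

attribute [local instance] Matrix.normedAddCommGroup Matrix.normedSpace

/-- Euclidean dot product on `ℝ³` (vectors as `Fin 3 → ℝ`). -/
def dot3 (a b : Fin 3 → ℝ) : ℝ := ∑ i, a i * b i

/-- `(e₀, e₁, e₂)` is an orthonormal frame (orthonormal basis) of `ℝ³`. -/
def IsONFrame (e₀ e₁ e₂ : Fin 3 → ℝ) : Prop :=
  dot3 e₀ e₀ = 1 ∧ dot3 e₁ e₁ = 1 ∧ dot3 e₂ e₂ = 1 ∧
  dot3 e₀ e₁ = 0 ∧ dot3 e₀ e₂ = 0 ∧ dot3 e₁ e₂ = 0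

/-- All three coordinates of a vector are rational. -/
def RatCoords (a : Fin 3 → ℝ) : Prop := ∀ i, ∃ q : ℚ, a i = (q : ℝ)

section STGLAux

open Matrix

noncomputable section

/-! ### Rational rotations about the `z`-axis -/

def qc (q : ℚ) : ℝ := (1 - (q:ℝ)^2)/(1 + (q:ℝ)^2)
def qs (q : ℚ) : ℝ := 2*(q:ℝ)/(1 + (q:ℝ)^2)

lemma hcs (q : ℚ) : qc q ^ 2 + qs q ^ 2 = 1 := by
  simp only [qc, qs]; field_simp; ring

lemma qcs_inj {q q' : ℚ} (hc : qc q = qc q') (hs : qs q = qs q') : q = q' := by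
  simp only [qc, qs] at hc hs
  rw [div_eq_div_iff (by positivity) (by positivity)] at hc hs
  have hsq : (q:ℝ)^2 = (q':ℝ)^2 := by linear_combination -hc/2
  have h1 : ((q:ℝ) - q') * (1 + (q:ℝ)^2) = 0 := by linear_combination hs/2 + (q:ℝ)*hsq
  have h2 : (q:ℝ) = q' := by
    rcases mul_eq_zero.mp h1 with h | h
    · linarith
    · exact absurd h (by positivity)
  exact_mod_cast h2

def Qm (q : ℚ) : Matrix (Fin 3) (Fin 3) ℝ :=
  !![qc q, -qs q, 0; qs q, qc q, 0; 0, 0, 1]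

lemma QmT (q : ℚ) : (Qm q)ᵀ = !![qc q, qs q, 0; -qs q, qc q, 0; 0, 0, 1] := by
  ext i j
  fin_cases i <;> fin_cases j <;> simp [Qm, Matrix.transpose_apply]

lemma Qm_orth (q : ℚ) : (Qm q)ᵀ * Qm q = 1 := by
  have h := hcs q
  rw [QmT]
  ext i j
  fin_cases i <;> fin_cases j <;>
    simp [Qm, Matrix.mul_apply, Fin.sum_univ_three, Matrix.one_apply] <;>
    (first | linear_combination h | linear_combination -h | linarith [h])

lemma Qm_orth' (q : ℚ) : Qm q * (Qm q)ᵀ = 1 := by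
  have h := hcs q
  rw [QmT]
  ext i j
  fin_cases i <;> fin_cases j <;>
    simp [Qm, Matrix.mul_apply, Fin.sum_univ_three, Matrix.one_apply] <;>
    (first | linear_combination h | linear_combination -h | linarith [h])

lemma Qm_vec_inj (q : ℚ) {x y : Fin 3 → ℝ} (h : Qm q *ᵥ x = Qm q *ᵥ y) : x = y := by
  have := congrArg (fun v => (Qm q)ᵀ *ᵥ v) h
  simpa [Matrix.mulVec_mulVec, Qm_orth q] using this

/-! ### The ten base frames -/

def bq : Fin 10 → Fin 3 → ℤ :=
  ![![5,0,0], ![0,5,0], ![3,4,0], ![3,0,4], ![0,3,4],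
    ![-5,0,0], ![0,-5,0], ![-3,-4,0], ![-3,0,-4], ![0,-3,-4]]

def baseη (i : Fin 10) : Fin 3 → ℝ := fun j => (bq i j : ℝ)/5

def basea : Fin 10 → Fin 3 → ℝ :=
  ![![0,1,0], ![1,0,0], ![-4/5,3/5,0], ![0,1,0], ![1,0,0],
    ![0,0,1], ![0,0,1], ![0,0,1], ![-4/5,0,3/5], ![0,-4/5,3/5]]

def baseb : Fin 10 → Fin 3 → ℝ :=
  ![![0,0,1], ![0,0,1], ![0,0,1], ![-4/5,0,3/5], ![0,-4/5,3/5],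
    ![0,1,0], ![1,0,0], ![-4/5,3/5,0], ![0,1,0], ![1,0,0]]

lemma bq_inj : Function.Injective bq := by decide

lemma baseη_inj : Function.Injective baseη := by
  intro i j h
  apply bq_inj
  funext k
  have h5 := congrFun h k
  simp only [baseη] at h5
  have h6 : (bq i k : ℝ) = bq j k := by linarith
  exact_mod_cast h6

lemma base_frames (i : Fin 10) :
    dot3 (baseη i) (baseη i) = 1 ∧ dot3 (basea i) (basea i) = 1 ∧
    dot3 (baseb i) (baseb i) = 1 ∧ dot3 (baseη i) (basea i) = 0 ∧
    dot3 (baseη i) (baseb i) = 0 ∧ dot3 (basea i) (baseb i) = 0 := by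
  fin_cases i <;>
    norm_num [dot3, baseη, basea, baseb, bq, Fin.sum_univ_three, Matrix.cons_val_two, Matrix.vecHead, Matrix.vecTail]

/-! ### The matrices and coefficients -/

def Dm (i : Fin 10) : Matrix (Fin 3) (Fin 3) ℝ :=
  vecMulVec (basea i) (basea i) - vecMulVec (baseb i) (baseb i)

def t2f (S : Matrix (Fin 3) (Fin 3) ℝ) : ℝ := -(25/12) * S 0 1
def t3f (S : Matrix (Fin 3) (Fin 3) ℝ) : ℝ := (25/12) * S 0 2
def t4f (S : Matrix (Fin 3) (Fin 3) ℝ) : ℝ := (25/12) * S 1 2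
def t1f (S : Matrix (Fin 3) (Fin 3) ℝ) : ℝ :=
  S 0 0 - (16/25) * t2f S + (16/25) * t3f S - t4f S
def t0f (S : Matrix (Fin 3) (Fin 3) ℝ) : ℝ :=
  S 1 1 - (9/25) * t2f S - t3f S + (16/25) * t4f S

def tvf (n : ℕ) (S : Matrix (Fin 3) (Fin 3) ℝ) : ℝ :=
  if n = 0 then t0f S else if n = 1 then t1f S else if n = 2 then t2f S
  else if n = 3 then t3f S else t4f S

def coef (i : Fin 10) (S : Matrix (Fin 3) (Fin 3) ℝ) : ℝ :=
  (if i.val < 5 then 1 else -1) * tvf (i.val % 5) S / 2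

lemma fin3_mk2 : (⟨2, by omega⟩ : Fin 3) = 2 := rfl

set_option maxHeartbeats 2000000 in
lemma base_identity (S : Matrix (Fin 3) (Fin 3) ℝ) (hsym : S.IsSymm) (htr : S.trace = 0) :
    ∑ i : Fin 10, (1 + coef i S) • Dm i = S := by
  have h10 : S 1 0 = S 0 1 := by rw [← hsym.apply 1 0]
  have h20 : S 2 0 = S 0 2 := by rw [← hsym.apply 2 0]
  have h21 : S 2 1 = S 1 2 := by rw [← hsym.apply 2 1]
  have htr' : S 0 0 + S 1 1 + S 2 2 = 0 := by
    simpa [Matrix.trace, Fin.sum_univ_three] using htr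
  ext a b
  rw [Matrix.sum_apply]
  have hD : ∀ i, ((1 + coef i S) • Dm i) a b
      = (1 + coef i S) * (basea i a * basea i b - baseb i a * baseb i b) := by
    intro i
    simp only [Dm, Matrix.sub_apply, vecMulVec_apply, Matrix.smul_apply, smul_eq_mul]
  simp only [hD]
  rw [Fin.sum_univ_succ, Fin.sum_univ_succ, Fin.sum_univ_succ, Fin.sum_univ_succ,
    Fin.sum_univ_succ, Fin.sum_univ_succ, Fin.sum_univ_succ, Fin.sum_univ_succ,
    Fin.sum_univ_succ, Fin.sum_univ_one]
  fin_cases a <;> fin_cases b <;>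
    · simp only [fin3_mk2, Fin.mk_zero, Fin.mk_one]
      norm_num [coef, tvf, t0f, t1f, t2f, t3f, t4f, basea, baseb, Matrix.cons_val_two,
        Matrix.vecHead, Matrix.vecTail]
      linarith [h10, h20, h21, htr']

/-! ### Conjugation lemmas -/

lemma vmv_conj (q : ℚ) (x y : Fin 3 → ℝ) :
    vecMulVec (Qm q *ᵥ x) (Qm q *ᵥ y) = Qm q * vecMulVec x y * (Qm q)ᵀ := by
  ext a b
  simp [vecMulVec_apply, Matrix.mul_apply, Matrix.mulVec, dotProduct,
    Fin.sum_univ_three, Matrix.transpose_apply]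
  ring

lemma Dm_conj (q : ℚ) (i : Fin 10) :
    vecMulVec (Qm q *ᵥ basea i) (Qm q *ᵥ basea i)
      - vecMulVec (Qm q *ᵥ baseb i) (Qm q *ᵥ baseb i)
      = Qm q * Dm i * (Qm q)ᵀ := by
  rw [vmv_conj, vmv_conj, Dm, Matrix.mul_sub, Matrix.sub_mul]

lemma dot_conj (q : ℚ) (x y : Fin 3 → ℝ) :
    dot3 (Qm q *ᵥ x) (Qm q *ᵥ y) = dot3 x y := by
  have h := hcs q
  simp [dot3, Matrix.mulVec, dotProduct, Fin.sum_univ_three, Qm]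
  linear_combination (x 0 * y 0 + x 1 * y 1) * h

/-! ### Bounds -/

lemma Qm_entry_le (q : ℚ) (a b : Fin 3) : |Qm q a b| ≤ 1 := by
  have h := hcs q
  have hc : |qc q| ≤ 1 := by
    rw [abs_le]; constructor <;> nlinarith [sq_nonneg (qs q)]
  have hs : |qs q| ≤ 1 := by
    rw [abs_le]; constructor <;> nlinarith [sq_nonneg (qc q)]
  have hc' := abs_le.mp hc
  have hs' := abs_le.mp hs
  fin_cases a <;> fin_cases b <;>
    simp [Qm] <;> rw [abs_le] <;> constructor <;> linarith [hc'.1, hc'.2, hs'.1, hs'.2]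

lemma entry_bound (q : ℚ) (R : Matrix (Fin 3) (Fin 3) ℝ) (a b : Fin 3) :
    |((Qm q)ᵀ * R * Qm q) a b| ≤ 9 * ‖R‖ := by
  have key : ∀ p r : Fin 3, |Qm q p a * R p r * Qm q r b| ≤ ‖R‖ := by
    intro p r
    rw [abs_mul, abs_mul]
    calc |Qm q p a| * |R p r| * |Qm q r b|
        ≤ 1 * ‖R‖ * 1 := by
          gcongr
          · exact Qm_entry_le q p a
          · simpa [Real.norm_eq_abs] using
              Matrix.norm_entry_le_entrywise_sup_norm R (i := p) (j := r)
          · exact Qm_entry_le q r b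
      _ = ‖R‖ := by ring
  have K := fun p r => abs_le.mp (key p r)
  have e : ((Qm q)ᵀ * R * Qm q) a b =
      Qm q 0 a * R 0 0 * Qm q 0 b + Qm q 0 a * R 0 1 * Qm q 1 b +
      Qm q 0 a * R 0 2 * Qm q 2 b + Qm q 1 a * R 1 0 * Qm q 0 b +
      Qm q 1 a * R 1 1 * Qm q 1 b + Qm q 1 a * R 1 2 * Qm q 2 b +
      Qm q 2 a * R 2 0 * Qm q 0 b + Qm q 2 a * R 2 1 * Qm q 1 b +
      Qm q 2 a * R 2 2 * Qm q 2 b := by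
    simp [Matrix.mul_apply, Matrix.transpose_apply, Fin.sum_univ_three]
    ring
  rw [e, abs_le]
  constructor <;>
    linarith [(K 0 0).1, (K 0 0).2, (K 0 1).1, (K 0 1).2, (K 0 2).1, (K 0 2).2,
      (K 1 0).1, (K 1 0).2, (K 1 1).1, (K 1 1).2, (K 1 2).1, (K 1 2).2,
      (K 2 0).1, (K 2 0).2, (K 2 1).1, (K 2 1).2, (K 2 2).1, (K 2 2).2]

set_option maxHeartbeats 2000000 in
lemma coef_bound (i : Fin 10) (S : Matrix (Fin 3) (Fin 3) ℝ)
    (h : ∀ a b, |S a b| ≤ 9/500) : |coef i S| ≤ 1/2 := by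
  have h01 := abs_le.mp (h 0 1); have h02 := abs_le.mp (h 0 2)
  have h12 := abs_le.mp (h 1 2); have h00 := abs_le.mp (h 0 0)
  have h11 := abs_le.mp (h 1 1)
  fin_cases i <;>
    · norm_num [coef, tvf, t0f, t1f, t2f, t3f, t4f]
      rw [abs_le]
      constructor <;>
        linarith [h01.1, h01.2, h02.1, h02.2, h12.1, h12.2, h00.1, h00.2, h11.1, h11.2]

/-! ### Smoothness -/

lemma contDiff_entry (p r : Fin 3) :
    ContDiff ℝ (⊤ : ℕ∞) (fun R : Matrix (Fin 3) (Fin 3) ℝ => R p r) := by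
  change ContDiff ℝ (⊤ : ℕ∞) ((ContinuousLinearMap.proj (R := ℝ) (φ := fun _ : Fin 3 => ℝ) r) ∘
    (ContinuousLinearMap.proj (R := ℝ) (φ := fun _ : Fin 3 => Fin 3 → ℝ) p))
  exact (ContinuousLinearMap.contDiff _).comp (ContinuousLinearMap.contDiff _)

lemma contDiff_conj_entry (q' : Matrix (Fin 3) (Fin 3) ℝ) (a b : Fin 3) :
    ContDiff ℝ (⊤ : ℕ∞) (fun R : Matrix (Fin 3) (Fin 3) ℝ => (q'ᵀ * R * q') a b) := by
  have e : (fun R : Matrix (Fin 3) (Fin 3) ℝ => (q'ᵀ * R * q') a b) =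
      fun R => ∑ r : Fin 3, (∑ p : Fin 3, q' p a * R p r) * q' r b := by
    funext R
    simp [Matrix.mul_apply, Matrix.transpose_apply]
  rw [e]
  apply ContDiff.sum; intro r _
  apply ContDiff.mul _ contDiff_const
  apply ContDiff.sum; intro p _
  exact contDiff_const.mul (contDiff_entry p r)

set_option maxHeartbeats 2000000 in
lemma contDiff_coef (q' : Matrix (Fin 3) (Fin 3) ℝ) (i : Fin 10) :
    ContDiff ℝ (⊤ : ℕ∞) (fun R : Matrix (Fin 3) (Fin 3) ℝ => 1 + coef i (q'ᵀ * R * q')) := by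
  apply ContDiff.add contDiff_const
  have h := contDiff_conj_entry q'
  fin_cases i <;>
    · norm_num [coef, tvf, t0f, t1f, t2f, t3f, t4f]
      repeat'
        first
        | exact h _ _
        | exact contDiff_const
        | apply ContDiff.div_const
        | apply ContDiff.neg
        | apply ContDiff.add
        | apply ContDiff.sub
        | apply ContDiff.mul

/-! ### The rotated data and selector functions -/

def gq (q : ℚ) (i : Fin 10) : Fin 3 → ℝ := Qm q *ᵥ baseη i

lemma gq_inj (q : ℚ) : Function.Injective (gq q) :=
  fun _ _ h => baseη_inj (Qm_vec_inj q h)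

def sel (q : ℚ) (f : Fin 10 → Fin 3 → ℝ) (η : Fin 3 → ℝ) : Fin 3 → ℝ :=
  if h : ∃ i, gq q i = η then Qm q *ᵥ f h.choose else 0

lemma sel_eval (q : ℚ) (f : Fin 10 → Fin 3 → ℝ) (i : Fin 10) :
    sel q f (gq q i) = Qm q *ᵥ f i := by
  have h : ∃ j, gq q j = gq q i := ⟨i, rfl⟩
  rw [sel, dif_pos h]
  exact congrArg (fun k => Qm q *ᵥ f k) (gq_inj q h.choose_spec)

def Gam (q : ℚ) (η : Fin 3 → ℝ) : Matrix (Fin 3) (Fin 3) ℝ → ℝ :=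
  if h : ∃ i, gq q i = η then
    fun R => Real.sqrt (1 + coef h.choose ((Qm q)ᵀ * R * Qm q))
  else fun _ => 0

lemma Gam_eval (q : ℚ) (i : Fin 10) :
    Gam q (gq q i) = fun R => Real.sqrt (1 + coef i ((Qm q)ᵀ * R * Qm q)) := by
  have h : ∃ j, gq q j = gq q i := ⟨i, rfl⟩
  rw [Gam, dif_pos h]
  rw [gq_inj q h.choose_spec]

/-! ### Choice of a good rotation -/

lemma gq_param_inj (i : Fin 10) : Function.Injective (fun q : ℚ => gq q i) := by
  have hv : baseη i 0 ^ 2 + baseη i 1 ^ 2 > 0 := by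
    fin_cases i <;> norm_num [baseη, bq]
  intro q q' h
  have h0 := congrFun h 0
  have h1 := congrFun h 1
  simp [gq, Matrix.mulVec, dotProduct, Fin.sum_univ_three, Qm,
    Matrix.vecHead, Matrix.vecTail] at h0 h1
  have ec : (qc q - qc q') * (baseη i 0 ^ 2 + baseη i 1 ^ 2) = 0 := by
    linear_combination baseη i 0 * h0 + baseη i 1 * h1
  have es : (qs q - qs q') * (baseη i 0 ^ 2 + baseη i 1 ^ 2) = 0 := by
    linear_combination baseη i 0 * h1 - baseη i 1 * h0
  have hc : qc q = qc q' := by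
    rcases mul_eq_zero.mp ec with h' | h'
    · linarith
    · linarith
  have hs : qs q = qs q' := by
    rcases mul_eq_zero.mp es with h' | h'
    · linarith
    · linarith
  exact qcs_inj hc hs

lemma good_q (F : Finset (Fin 3 → ℝ)) : ∃ q : ℚ, ∀ i : Fin 10, gq q i ∉ F := by
  have hfin : (⋃ i : Fin 10, ((fun q : ℚ => gq q i) ⁻¹' (F : Set (Fin 3 → ℝ)))).Finite := by
    apply Set.finite_iUnion
    intro i
    exact Set.Finite.preimage ((gq_param_inj i).injOn) F.finite_toSet
  obtain ⟨q, hq⟩ := hfin.infinite_compl.nonempty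
  refine ⟨q, fun i hi => hq ?_⟩
  exact Set.mem_iUnion.mpr ⟨i, hi⟩

end
end STGLAux

section MainProof
open Matrix

/-- Symmetric geometric lemma for traceless tensors. -/
theorem symmetric_traceless_geometric_lemma
    (F : Finset (Fin 3 → ℝ)) (hF : ∀ v ∈ F, dot3 v v = 1) :
    ∃ (ε : ℝ) (Λ : Finset (Fin 3 → ℝ))
      (η₁ η₂ : (Fin 3 → ℝ) → (Fin 3 → ℝ))
      (Γ : (Fin 3 → ℝ) → Matrix (Fin 3) (Fin 3) ℝ → ℝ),
      0 < ε ∧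
      (∀ η ∈ Λ, RatCoords η ∧ IsONFrame η (η₁ η) (η₂ η)) ∧
      (∀ η ∈ Λ, η ∉ F) ∧
      (∀ η ∈ Λ, ContDiffOn ℝ (⊤ : ℕ∞) (Γ η) (Metric.ball (0 : Matrix (Fin 3) (Fin 3) ℝ) ε)) ∧
      (∀ R : Matrix (Fin 3) (Fin 3) ℝ, R.IsSymm → R.trace = 0 → ‖R‖ < ε →
        R = ∑ η ∈ Λ, (Γ η R) ^ 2 •
          (Matrix.vecMulVec (η₁ η) (η₁ η) - Matrix.vecMulVec (η₂ η) (η₂ η))) := by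
  classical
  obtain ⟨q, hq⟩ := good_q F
  refine ⟨1/500, Finset.image (gq q) Finset.univ, sel q basea, sel q baseb, Gam q,
    by norm_num, ?_, ?_, ?_, ?_⟩
  · -- rational coordinates and orthonormal frames
    intro η hη
    obtain ⟨i, _, rfl⟩ := Finset.mem_image.mp hη
    constructor
    · -- RatCoords
      intro j
      fin_cases j
      · refine ⟨(1 - q^2)/(1 + q^2) * (bq i 0)/5 - 2*q/(1+q^2) * (bq i 1)/5, ?_⟩
        simp [gq, Qm, Matrix.mulVec, dotProduct, Fin.sum_univ_three, baseη, qc, qs,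
          Matrix.vecHead, Matrix.vecTail]
        push_cast
        ring
      · refine ⟨2*q/(1+q^2) * (bq i 0)/5 + (1 - q^2)/(1+q^2) * (bq i 1)/5, ?_⟩
        simp [gq, Qm, Matrix.mulVec, dotProduct, Fin.sum_univ_three, baseη, qc, qs,
          Matrix.vecHead, Matrix.vecTail]
        push_cast
        ring
      · refine ⟨(bq i 2)/5, ?_⟩
        simp [gq, Qm, Matrix.mulVec, dotProduct, Fin.sum_univ_three, baseη, qc, qs,
          Matrix.vecHead, Matrix.vecTail, fin3_mk2]
        try push_cast
        try ring
    · -- IsONFrame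
      rw [sel_eval, sel_eval]
      obtain ⟨f1, f2, f3, f4, f5, f6⟩ := base_frames i
      exact ⟨by rw [gq, dot_conj]; exact f1, by rw [dot_conj]; exact f2,
        by rw [dot_conj]; exact f3, by rw [gq, dot_conj]; exact f4,
        by rw [gq, dot_conj]; exact f5, by rw [dot_conj]; exact f6⟩
  · -- avoid F
    intro η hη
    obtain ⟨i, _, rfl⟩ := Finset.mem_image.mp hη
    exact hq i
  · -- smoothness
    intro η hη
    obtain ⟨i, _, rfl⟩ := Finset.mem_image.mp hη
    rw [Gam_eval]
    intro x hx
    have hx' : ‖x‖ < 1/500 := by simpa [Metric.mem_ball, dist_zero_right] using hx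
    have hb : ∀ a b, |((Qm q)ᵀ * x * Qm q) a b| ≤ 9/500 := by
      intro a b
      have := entry_bound q x a b
      linarith
    have hpos : 0 < 1 + coef i ((Qm q)ᵀ * x * Qm q) := by
      have := abs_le.mp (coef_bound i _ hb)
      linarith [this.1]
    exact ((contDiff_coef (Qm q) i).contDiffAt.sqrt hpos.ne').contDiffWithinAt
  · -- the identity
    intro R hsym htr hR
    have hb : ∀ a b, |((Qm q)ᵀ * R * Qm q) a b| ≤ 9/500 := by
      intro a b
      have := entry_bound q R a b
      linarith
    have hnn : ∀ i : Fin 10, 0 ≤ 1 + coef i ((Qm q)ᵀ * R * Qm q) := by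
      intro i
      have := abs_le.mp (coef_bound i _ hb)
      linarith [this.1]
    have hSsym : ((Qm q)ᵀ * R * Qm q).IsSymm := by
      rw [Matrix.IsSymm, Matrix.transpose_mul, Matrix.transpose_mul,
        Matrix.transpose_transpose, hsym.eq, Matrix.mul_assoc]
    have hStr : ((Qm q)ᵀ * R * Qm q).trace = 0 := by
      rw [Matrix.trace_mul_cycle, Qm_orth', Matrix.one_mul, htr]
    have hBI := base_identity _ hSsym hStr
    rw [Finset.sum_image (fun x _ y _ h => gq_inj q h)]
    have hterm : ∀ i : Fin 10,
        (Gam q (gq q i) R) ^ 2 •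
          (Matrix.vecMulVec (sel q basea (gq q i)) (sel q basea (gq q i))
            - Matrix.vecMulVec (sel q baseb (gq q i)) (sel q baseb (gq q i)))
        = (1 + coef i ((Qm q)ᵀ * R * Qm q)) • (Qm q * Dm i * (Qm q)ᵀ) := by
      intro i
      rw [Gam_eval, sel_eval, sel_eval, Dm_conj]
      congr 1
      exact Real.sq_sqrt (hnn i)
    rw [Finset.sum_congr rfl (fun i _ => hterm i)]
    have hsum : ∑ i : Fin 10, (1 + coef i ((Qm q)ᵀ * R * Qm q)) • (Qm q * Dm i * (Qm q)ᵀ)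
        = Qm q * (∑ i : Fin 10, (1 + coef i ((Qm q)ᵀ * R * Qm q)) • Dm i) * (Qm q)ᵀ := by
      rw [Matrix.mul_sum, Matrix.sum_mul]
      exact Finset.sum_congr rfl fun i _ => by rw [Matrix.mul_smul, Matrix.smul_mul]
    rw [hsum, hBI]
    rw [← Matrix.mul_assoc, ← Matrix.mul_assoc, Qm_orth', Matrix.one_mul,
      Matrix.mul_assoc, Qm_orth', Matrix.mul_one]

end MainProof
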